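/- arXiv:1601.04825 — 3 statements merged into one kernel-verified Lean document; each statement's English description precedes it below -/
import Mathlib

section
/- Let d ≥ 1, ε ∈ ℝ, and let S : ℝ^d → ℝ, A : ℝ^d → ℂ be smooth (C^∞). With the operators N₁(S,A) = ( −|∇S|²/2 , −∇S·∇A − (A/2)ΔS + (i/2)ΔA ) and N₂(S,A) = ( 0 , (i(ε−1)/2)ΔA ), and their Gateaux derivatives DN₁(S,A)·(S₀,A₀) = ( −∇S·∇S₀ , −∇S·∇A₀ − (A₀/2)ΔS − ∇S₀·∇A − (A/2)ΔS₀ + (i/2)ΔA₀ ) and DN₂(S,A)·(S₀,A₀) = ( 0 , (i(ε−1)/2)ΔA₀ ), the commutator [N₁,N₂](S,A) := DN₁(S,A)·N₂(S,A) − DN₂(S,A)·N₁(S,A) equals, at every point, ( 0 , (i(ε−1)/2) ( ∇ΔS·∇A + (A/2)Δ²S + 2 Σ_{k=1}^d ∇(∂_k S)·∇(∂_k A) + ∇A·∇ΔS ) ). -/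
noncomputable section

open Real Complex Finset

/-- Partial derivative in the `k`-th coordinate direction of a function on `ℝ^d`. -/
def pds {d : ℕ} {E : Type*} [NormedAddCommGroup E] [NormedSpace ℝ E]
    (f : (Fin d → ℝ) → E) (k : Fin d) (x : Fin d → ℝ) : E :=
  fderiv ℝ f x (Pi.single k 1)

/-- Laplacian `Δ = ∑ₖ ∂²_{x_k}` of a function on `ℝ^d`. -/
def laps {d : ℕ} {E : Type*} [NormedAddCommGroup E] [NormedSpace ℝ E]
    (f : (Fin d → ℝ) → E) (x : Fin d → ℝ) : E :=
  ∑ k : Fin d, pds (pds f k) k x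

/-- First (phase) component of the operator `N₁(S,A) = (−|∇S|²/2, −∇S·∇A − (A/2)ΔS + (i/2)ΔA)`. -/
def opN1S {d : ℕ} (S : (Fin d → ℝ) → ℝ) : (Fin d → ℝ) → ℝ :=
  fun x => -(∑ k : Fin d, (pds S k x) ^ 2) / 2

/-- Second (amplitude) component of the operator `N₁`. -/
def opN1A {d : ℕ} (S : (Fin d → ℝ) → ℝ) (A : (Fin d → ℝ) → ℂ) : (Fin d → ℝ) → ℂ :=
  fun x => -(∑ k : Fin d, ((pds S k x : ℝ) : ℂ) * pds A k x)
    - A x / 2 * ((laps S x : ℝ) : ℂ) + Complex.I / 2 * laps A x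

/-- First component of the Gateaux derivative `DN₁(S,A)·(S₀,A₀)`. -/
def opDN1S {d : ℕ} (S S₀ : (Fin d → ℝ) → ℝ) : (Fin d → ℝ) → ℝ :=
  fun x => -∑ k : Fin d, pds S k x * pds S₀ k x

/-- Second component of the Gateaux derivative `DN₁(S,A)·(S₀,A₀)`. -/
def opDN1A {d : ℕ} (S : (Fin d → ℝ) → ℝ) (A : (Fin d → ℝ) → ℂ)
    (S₀ : (Fin d → ℝ) → ℝ) (A₀ : (Fin d → ℝ) → ℂ) : (Fin d → ℝ) → ℂ :=
  fun x => -(∑ k : Fin d, ((pds S k x : ℝ) : ℂ) * pds A₀ k x)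
    - A₀ x / 2 * ((laps S x : ℝ) : ℂ)
    - (∑ k : Fin d, ((pds S₀ k x : ℝ) : ℂ) * pds A k x)
    - A x / 2 * ((laps S₀ x : ℝ) : ℂ)
    + Complex.I / 2 * laps A₀ x

/-- Second (amplitude) component of the operator `N₂(S,A) = (0, (i(ε−1)/2)ΔA)`;
its first component is `0`. -/
def opN2A {d : ℕ} (ε : ℝ) (A : (Fin d → ℝ) → ℂ) : (Fin d → ℝ) → ℂ :=
  fun x => Complex.I * ((ε : ℂ) - 1) / 2 * laps A x

/-- Second component of the Gateaux derivative `DN₂(S,A)·(S₀,A₀) = (0, (i(ε−1)/2)ΔA₀)`;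
its first component is `0`. -/
def opDN2A {d : ℕ} (ε : ℝ) (A₀ : (Fin d → ℝ) → ℂ) : (Fin d → ℝ) → ℂ :=
  fun x => Complex.I * ((ε : ℂ) - 1) / 2 * laps A₀ x

/-! Write `c = i(ε−1)/2`. Both `N₂` and `DN₂` act as `c Δ` on the amplitude, and `DN₁` in a
direction with `S₀ = 0` is linear in `A₀`, so the commutator is `c` times
`Δ(∇S·∇A) − ∇S·∇ΔA + (Δ(A ΔS) − ΔA ΔS)/2`. Expanding both Laplacians with the Leibniz rule
`Δ(fg) = Δf g + 2 ∇f·∇g + f Δg` and commuting `∂ₖ` with `Δ` (symmetry of second derivatives)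
leaves exactly the stated terms. -/

section

variable {d : ℕ} {E : Type*} [NormedAddCommGroup E] [NormedSpace ℝ E]
  {f g : (Fin d → ℝ) → E} {x : Fin d → ℝ}

theorem pds_const (c : E) (k : Fin d) : pds (fun _ => c) k x = 0 := by
  simp [pds]

theorem laps_const (c : E) : laps (fun _ => c) x = 0 := by
  have h (k : Fin d) : pds (fun _ : Fin d → ℝ => c) k = fun _ => 0 := funext fun _ => pds_const c k
  simp [laps, h, pds_const]

theorem pds_add (hf : DifferentiableAt ℝ f x) (hg : DifferentiableAt ℝ g x) (k : Fin d) :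
    pds (fun y => f y + g y) k x = pds f k x + pds g k x := by
  simp [pds, fderiv_fun_add hf hg]

theorem pds_sub (hf : DifferentiableAt ℝ f x) (hg : DifferentiableAt ℝ g x) (k : Fin d) :
    pds (fun y => f y - g y) k x = pds f k x - pds g k x := by
  simp [pds, fderiv_fun_sub hf hg]

theorem pds_neg (k : Fin d) : pds (fun y => -f y) k x = -pds f k x := by
  simp [pds]

theorem pds_sum {ι : Type*} {s : Finset ι} {f : ι → (Fin d → ℝ) → E}
    (hf : ∀ i ∈ s, DifferentiableAt ℝ (f i) x) (k : Fin d) :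
    pds (fun y => ∑ i ∈ s, f i y) k x = ∑ i ∈ s, pds (f i) k x := by
  simp [pds, fderiv_fun_sum hf]

theorem pds_smul {c : (Fin d → ℝ) → ℝ} (hc : DifferentiableAt ℝ c x)
    (hf : DifferentiableAt ℝ f x) (k : Fin d) :
    pds (fun y => c y • f y) k x = c x • pds f k x + pds c k x • f x := by
  simp [pds, fderiv_fun_smul hc hf]

theorem pds_const_mul {𝔸 : Type*} [NormedRing 𝔸] [NormedAlgebra ℝ 𝔸] {f : (Fin d → ℝ) → 𝔸}
    (hf : DifferentiableAt ℝ f x) (c : 𝔸) (k : Fin d) :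
    pds (fun y => c * f y) k x = c * pds f k x := by
  simp [pds, fderiv_const_mul hf c]

theorem contDiff_pds {m n : WithTop ℕ∞} (hf : ContDiff ℝ n f) (hmn : m + 1 ≤ n) (k : Fin d) :
    ContDiff ℝ m (pds f k) :=
  (hf.fderiv_right hmn).clm_apply contDiff_const

theorem contDiff_laps {m n : WithTop ℕ∞} (hf : ContDiff ℝ n f) (hmn : m + 2 ≤ n) :
    ContDiff ℝ m (laps f) := by
  rw [← one_add_one_eq_two, ← add_assoc] at hmn
  exact ContDiff.sum fun k _ => contDiff_pds (contDiff_pds hf hmn k) le_rfl k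

theorem differentiable_pds (hf : ContDiff ℝ 2 f) (k : Fin d) : Differentiable ℝ (pds f k) :=
  (contDiff_pds (m := 1) hf (by norm_num) k).differentiable one_ne_zero

theorem laps_add (hf : ContDiff ℝ 2 f) (hg : ContDiff ℝ 2 g) (x : Fin d → ℝ) :
    laps (fun y => f y + g y) x = laps f x + laps g x := by
  have h (k : Fin d) : pds (fun y => f y + g y) k = fun y => pds f k y + pds g k y :=
    funext fun y => pds_add (hf.differentiable two_ne_zero y) (hg.differentiable two_ne_zero y) k
  simp only [laps, h, fun k => pds_add (differentiable_pds hf k x) (differentiable_pds hg k x) k,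
    Finset.sum_add_distrib]

theorem laps_sub (hf : ContDiff ℝ 2 f) (hg : ContDiff ℝ 2 g) (x : Fin d → ℝ) :
    laps (fun y => f y - g y) x = laps f x - laps g x := by
  have h (k : Fin d) : pds (fun y => f y - g y) k = fun y => pds f k y - pds g k y :=
    funext fun y => pds_sub (hf.differentiable two_ne_zero y) (hg.differentiable two_ne_zero y) k
  simp only [laps, h, fun k => pds_sub (differentiable_pds hf k x) (differentiable_pds hg k x) k,
    Finset.sum_sub_distrib]

theorem laps_neg (x : Fin d → ℝ) : laps (fun y => -f y) x = -laps f x := by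
  have h (k : Fin d) : pds (fun y => -f y) k = fun y => -pds f k y := funext fun _ => pds_neg k
  simp only [laps, h, pds_neg, Finset.sum_neg_distrib]

theorem laps_sum {ι : Type*} {s : Finset ι} {f : ι → (Fin d → ℝ) → E}
    (hf : ∀ i ∈ s, ContDiff ℝ 2 (f i)) (x : Fin d → ℝ) :
    laps (fun y => ∑ i ∈ s, f i y) x = ∑ i ∈ s, laps (f i) x := by
  have h (k : Fin d) : pds (fun y => ∑ i ∈ s, f i y) k = fun y => ∑ i ∈ s, pds (f i) k y :=
    funext fun y => pds_sum (fun i hi => (hf i hi).differentiable two_ne_zero y) k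
  simp only [laps, h,
    fun k => pds_sum (fun i hi => differentiable_pds (hf i hi) k x) k (f := fun i => pds (f i) k)]
  exact Finset.sum_comm

theorem laps_const_mul {𝔸 : Type*} [NormedRing 𝔸] [NormedAlgebra ℝ 𝔸] {f : (Fin d → ℝ) → 𝔸}
    (hf : ContDiff ℝ 2 f) (c : 𝔸) (x : Fin d → ℝ) :
    laps (fun y => c * f y) x = c * laps f x := by
  have h (k : Fin d) : pds (fun y => c * f y) k = fun y => c * pds f k y :=
    funext fun y => pds_const_mul (hf.differentiable two_ne_zero y) c k
  simp only [laps, h, fun k => pds_const_mul (differentiable_pds hf k x) c k, Finset.mul_sum]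

theorem laps_smul {c : (Fin d → ℝ) → ℝ} (hc : ContDiff ℝ 2 c) (hf : ContDiff ℝ 2 f)
    (x : Fin d → ℝ) :
    laps (fun y => c y • f y) x
      = laps c x • f x + (2 : ℝ) • ∑ k, pds c k x • pds f k x + c x • laps f x := by
  have h (k : Fin d) : pds (fun y => c y • f y) k = fun y => c y • pds f k y + pds c k y • f y :=
    funext fun y => pds_smul (hc.differentiable two_ne_zero y) (hf.differentiable two_ne_zero y) k
  have hk (k : Fin d) : pds (fun y => c y • pds f k y + pds c k y • f y) k x
      = (c x • pds (pds f k) k x + pds c k x • pds f k x)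
        + (pds c k x • pds f k x + pds (pds c k) k x • f x) := by
    have hc' := hc.differentiable two_ne_zero x
    have hf' := hf.differentiable two_ne_zero x
    rw [pds_add (hc'.fun_smul (differentiable_pds hf k x))
        ((differentiable_pds hc k x).fun_smul hf'),
      pds_smul hc' (differentiable_pds hf k x), pds_smul (differentiable_pds hc k x) hf']
  simp only [laps, h, hk, Finset.sum_add_distrib, Finset.sum_smul, Finset.smul_sum, two_smul]
  abel

theorem pds_pds_comm (hf : ContDiff ℝ 2 f) (j k : Fin d) (x : Fin d → ℝ) :
    pds (pds f j) k x = pds (pds f k) j x := by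
  have hd : DifferentiableAt ℝ (fderiv ℝ f) x :=
    (hf.fderiv_right (m := 1) (by norm_num)).differentiable one_ne_zero x
  have hdir (v w : Fin d → ℝ) :
      fderiv ℝ (fun y => fderiv ℝ f y v) x w = fderiv ℝ (fderiv ℝ f) x w v := by
    simp [fderiv_clm_apply hd (differentiableAt_const v)]
  have hsym : IsSymmSndFDerivAt ℝ f x := hf.contDiffAt.isSymmSndFDerivAt (by simp)
  unfold pds
  rw [hdir, hdir, hsym]

theorem pds_laps_comm (hf : ContDiff ℝ 3 f) (k : Fin d) (x : Fin d → ℝ) :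
    pds (laps f) k x = laps (pds f k) x := by
  have hf2 : ContDiff ℝ 2 f := hf.of_le (by norm_num)
  have hpds (j : Fin d) : ContDiff ℝ 2 (pds f j) := contDiff_pds hf (by norm_num) j
  rw [show laps f = fun y => ∑ j, pds (pds f j) j y from rfl,
    pds_sum (fun j _ => differentiable_pds (hpds j) j x)]
  refine Finset.sum_congr rfl fun j _ => ?_
  rw [pds_pds_comm (hpds j) j k x, funext (pds_pds_comm hf2 j k)]

theorem laps_sum_smul_pds {c : (Fin d → ℝ) → ℝ} (hc : ContDiff ℝ 3 c) (hf : ContDiff ℝ 3 f)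
    (x : Fin d → ℝ) :
    laps (fun y => ∑ k, pds c k y • pds f k y) x
      = ∑ k, pds (laps c) k x • pds f k x
        + (2 : ℝ) • ∑ k, ∑ j, pds (pds c k) j x • pds (pds f k) j x
        + ∑ k, pds c k x • pds (laps f) k x := by
  have hc2 (k : Fin d) : ContDiff ℝ 2 (pds c k) := contDiff_pds hc (by norm_num) k
  have hf2 (k : Fin d) : ContDiff ℝ 2 (pds f k) := contDiff_pds hf (by norm_num) k
  rw [laps_sum fun k _ => (hc2 k).fun_smul (hf2 k)]
  simp only [laps_smul (hc2 _) (hf2 _), ← pds_laps_comm hc, ← pds_laps_comm hf,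
    Finset.sum_add_distrib, Finset.smul_sum]

end

theorem laps_opN1A {d : ℕ} {S : (Fin d → ℝ) → ℝ} {A : (Fin d → ℝ) → ℂ}
    (hS : ContDiff ℝ 4 S) (hA : ContDiff ℝ 4 A) (x : Fin d → ℝ) :
    laps (opN1A S A) x
      = -(∑ k, ((pds (laps S) k x : ℝ) : ℂ) * pds A k x
          + 2 * ∑ k, ∑ j, ((pds (pds S k) j x : ℝ) : ℂ) * pds (pds A k) j x
          + ∑ k, ((pds S k x : ℝ) : ℂ) * pds (laps A) k x)
        - (((laps (laps S) x : ℝ) : ℂ) * (A x / 2) + ∑ k, ((pds (laps S) k x : ℝ) : ℂ) * pds A k x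
          + ((laps S x : ℝ) : ℂ) * (laps A x / 2))
        + I / 2 * laps (laps A) x := by
  have hA2 : ContDiff ℝ 2 A := hA.of_le (by norm_num)
  have hΔS : ContDiff ℝ 2 (laps S) := contDiff_laps hS (by norm_num)
  have hΔA : ContDiff ℝ 2 (laps A) := contDiff_laps hA (by norm_num)
  have hgrad : ContDiff ℝ 2 fun y => ∑ k, pds S k y • pds A k y :=
    ContDiff.sum fun k _ =>
      (contDiff_pds hS (by norm_num) k).fun_smul (contDiff_pds hA (by norm_num) k)
  have hA_half : ContDiff ℝ 2 fun y => (2⁻¹ : ℂ) * A y := contDiff_const.mul hA2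
  have hN1A : opN1A S A = fun y => -(∑ k, pds S k y • pds A k y) - laps S y • ((2⁻¹ : ℂ) * A y)
      + I / 2 * laps A y := by
    funext y
    simp only [opN1A, Complex.real_smul]
    ring
  rw [hN1A, laps_add (hgrad.neg.sub (hΔS.fun_smul hA_half)) (contDiff_const.mul hΔA),
    laps_sub hgrad.neg (hΔS.fun_smul hA_half), laps_neg, laps_const_mul hΔA,
    laps_smul hΔS hA_half, laps_const_mul hA2,
    laps_sum_smul_pds (hS.of_le (by norm_num)) (hA.of_le (by norm_num))]
  simp only [pds_const_mul (hA2.differentiable two_ne_zero x), Complex.real_smul,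
    Complex.ofReal_ofNat]
  have hcancel : 2 * ∑ k, ((pds (laps S) k x : ℝ) : ℂ) * (2⁻¹ * pds A k x)
      = ∑ k, ((pds (laps S) k x : ℝ) : ℂ) * pds A k x := by
    rw [Finset.mul_sum]
    exact Finset.sum_congr rfl fun _ _ => by ring
  rw [hcancel]
  ring

theorem commutator_N1_N2_general
    (d : ℕ) (ε : ℝ)
    (S : (Fin d → ℝ) → ℝ) (A : (Fin d → ℝ) → ℂ)
    (hS : ContDiff ℝ (⊤ : ℕ∞) S) (hA : ContDiff ℝ (⊤ : ℕ∞) A) :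
    ∀ x : Fin d → ℝ,
      (opDN1S S (fun _ => 0) x - 0 = 0)
      ∧ (opDN1A S A (fun _ => 0) (opN2A ε A) x - opDN2A ε (opN1A S A) x
          = Complex.I * ((ε : ℂ) - 1) / 2 *
            ((∑ k : Fin d, ((pds (laps S) k x : ℝ) : ℂ) * pds A k x)
              + A x / 2 * ((laps (laps S) x : ℝ) : ℂ)
              + 2 * (∑ k : Fin d, ∑ j : Fin d,
                  ((pds (pds S k) j x : ℝ) : ℂ) * pds (pds A k) j x)
              + ∑ k : Fin d, pds A k x * ((pds (laps S) k x : ℝ) : ℂ))) := by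
  intro x
  refine ⟨by simp [opDN1S, pds_const], ?_⟩
  have hS4 : ContDiff ℝ 4 S := contDiff_infty.1 hS 4
  have hA4 : ContDiff ℝ 4 A := contDiff_infty.1 hA 4
  have hΔA : ContDiff ℝ 2 (laps A) := contDiff_laps hA4 (by norm_num)
  have hN2A : opN2A ε A = fun y => I * ((ε : ℂ) - 1) / 2 * laps A y := rfl
  simp only [opDN1A, opDN2A, hN2A, pds_const, laps_const, laps_const_mul hΔA,
    pds_const_mul (hΔA.differentiable two_ne_zero x), laps_opN1A hS4 hA4, Complex.ofReal_zero,
    zero_mul, mul_zero, Finset.sum_const_zero, sub_zero]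
  set c : ℂ := I * ((ε : ℂ) - 1) / 2
  have hpull : ∑ k, ((pds S k x : ℝ) : ℂ) * (c * pds (laps A) k x)
      = c * ∑ k, ((pds S k x : ℝ) : ℂ) * pds (laps A) k x := by
    rw [Finset.mul_sum]
    exact Finset.sum_congr rfl fun _ _ => mul_left_comm _ _ _
  have hswap : ∑ k, pds A k x * ((pds (laps S) k x : ℝ) : ℂ)
      = ∑ k, ((pds (laps S) k x : ℝ) : ℂ) * pds A k x :=
    Finset.sum_congr rfl fun _ _ => mul_comm _ _
  rw [hpull, hswap]
  ring

/-- For smooth `S : ℝ^d → ℝ` and `A : ℝ^d → ℂ`, the commutator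
`[N₁,N₂](S,A) = DN₁(S,A)·N₂(S,A) − DN₂(S,A)·N₁(S,A)` equals, at every point,
`(0, (i(ε−1)/2)(∇ΔS·∇A + (A/2)Δ²S + 2Σₖ∇(∂ₖS)·∇(∂ₖA) + ∇A·∇ΔS))`. -/
theorem commutator_N1_N2
    (d : ℕ) (hd : 1 ≤ d) (ε : ℝ)
    (S : (Fin d → ℝ) → ℝ) (A : (Fin d → ℝ) → ℂ)
    (hS : ContDiff ℝ (⊤ : ℕ∞) S) (hA : ContDiff ℝ (⊤ : ℕ∞) A) :
    ∀ x : Fin d → ℝ,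
      (opDN1S S (fun _ => 0) x - 0 = 0)
      ∧ (opDN1A S A (fun _ => 0) (opN2A ε A) x - opDN2A ε (opN1A S A) x
          = Complex.I * ((ε : ℂ) - 1) / 2 *
            ((∑ k : Fin d, ((pds (laps S) k x : ℝ) : ℂ) * pds A k x)
              + A x / 2 * ((laps (laps S) x : ℝ) : ℂ)
              + 2 * (∑ k : Fin d, ∑ j : Fin d,
                  ((pds (pds S k) j x : ℝ) : ℂ) * pds (pds A k) j x)
              + ∑ k : Fin d, pds A k x * ((pds (laps S) k x : ℝ) : ℂ))) :=
  commutator_N1_N2_general d ε S A hS hA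
end
end

section
/- Let E be a real Banach space, let f : E → E be Fréchet differentiable, let g : E → E be Fréchet differentiable, and let v ∈ E. Suppose φ : ℝ → E and Θ : ℝ → (E →L E) (continuous linear maps) satisfy: φ(0) = v, Θ(0) = id, φ'(h) = f(φ(h)) for all h, and for every w ∈ E the variational equation (d/dh)(Θ(h)·w) = Df(φ(h)) · (Θ(h)·w). Define χ(h) := Θ(h)·g(v) − g(φ(h)). Then χ(0) = 0 and, for every h, χ'(h) = Df(φ(h)) · χ(h) + [f,g](φ(h)), where the commutator is [f,g](u) := Df(u)·g(u) − Dg(u)·f(u). -/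
open VectorField

section Defect

variable {𝕜 : Type*} [NontriviallyNormedField 𝕜] {E : Type*} [NormedAddCommGroup E]
  [NormedSpace 𝕜 E] {f g : E → E} {φ : 𝕜 → E} {Θ : 𝕜 → E →L[𝕜] E} {w : E} {h : 𝕜}

-- Mathlib's `lieBracket 𝕜 g f` is `Df·g − Dg·f`: the paper's commutator `[f,g]`, arguments swapped.
theorem hasDerivAt_defect (hg : DifferentiableAt 𝕜 g (φ h))
    (hφ : HasDerivAt φ (f (φ h)) h)
    (hΘ : HasDerivAt (fun s => Θ s w) (fderiv 𝕜 f (φ h) (Θ h w)) h) :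
    HasDerivAt (fun s => Θ s w - g (φ s))
      (fderiv 𝕜 f (φ h) (Θ h w - g (φ h)) + lieBracket 𝕜 g f (φ h)) h := by
  have hgφ : HasDerivAt (fun s => g (φ s)) (fderiv 𝕜 g (φ h) (f (φ h))) h :=
    hg.hasFDerivAt.comp_hasDerivAt h hφ
  convert hΘ.sub hgφ using 1
  · rfl
  · rw [lieBracket, map_sub, sub_add_sub_cancel]

end Defect

theorem defect_evolution_equation_general
    {E : Type*} [NormedAddCommGroup E] [NormedSpace ℝ E]
    (f g : E → E) (hg : Differentiable ℝ g)
    (v : E) (φ : ℝ → E) (Θ : ℝ → (E →L[ℝ] E))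
    (hφ0 : φ 0 = v)
    (hΘ0 : Θ 0 = ContinuousLinearMap.id ℝ E)
    (hφ : ∀ h : ℝ, HasDerivAt φ (f (φ h)) h)
    (hΘ : ∀ (w : E) (h : ℝ),
      HasDerivAt (fun s => Θ s w) (fderiv ℝ f (φ h) (Θ h w)) h) :
    (Θ 0 (g v) - g (φ 0) = 0)
    ∧ ∀ h : ℝ,
        HasDerivAt (fun s => Θ s (g v) - g (φ s))
          (fderiv ℝ f (φ h) (Θ h (g v) - g (φ h))
            + (fderiv ℝ f (φ h) (g (φ h)) - fderiv ℝ g (φ h) (f (φ h)))) h := by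
  exact ⟨by simp [hΘ0, hφ0], fun h => hasDerivAt_defect (hg (φ h)) (hφ h) (hΘ (g v) h)⟩

/-- Let `φ` be the flow of the vector field `f` starting at `v` and let
`Θ` be the derivative of this flow with respect to the initial condition (solution of the
variational equation). Then the defect `χ(h) = Θ(h)·g(v) − g(φ(h))` satisfies `χ(0) = 0` and
the linear inhomogeneous equation `χ'(h) = Df(φ(h))·χ(h) + [f,g](φ(h))`, where
`[f,g](u) = Df(u)·g(u) − Dg(u)·f(u)`. -/
theorem defect_evolution_equation
    {E : Type*} [NormedAddCommGroup E] [NormedSpace ℝ E] [CompleteSpace E]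
    (f g : E → E) (hf : Differentiable ℝ f) (hg : Differentiable ℝ g)
    (v : E) (φ : ℝ → E) (Θ : ℝ → (E →L[ℝ] E))
    (hφ0 : φ 0 = v)
    (hΘ0 : Θ 0 = ContinuousLinearMap.id ℝ E)
    (hφ : ∀ h : ℝ, HasDerivAt φ (f (φ h)) h)
    (hΘ : ∀ (w : E) (h : ℝ),
      HasDerivAt (fun s => Θ s w) (fderiv ℝ f (φ h) (Θ h w)) h) :
    (Θ 0 (g v) - g (φ 0) = 0)
    ∧ ∀ h : ℝ,
        HasDerivAt (fun s => Θ s (g v) - g (φ s))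
          (fderiv ℝ f (φ h) (Θ h (g v) - g (φ h))
            + (fderiv ℝ f (φ h) (g (φ h)) - fderiv ℝ g (φ h) (f (φ h)))) h :=
  defect_evolution_equation_general f g hg v φ Θ hφ0 hΘ0 hφ hΘ
end

section
/- Let a > 0, b > 0, M ≥ 0, and let T > 0 satisfy T√(ab) + arctan(M √(b/a)) < π/2. Let y : [0, T] → ℝ be continuous on [0, T], differentiable on [0, T), and satisfy y(0) ≤ M and y'(t) ≤ a + b · y(t)² for all t ∈ [0, T). Then for all t ∈ [0, T], y(t) ≤ √(a/b) · tan( t√(ab) + arctan( M √(b/a) ) ). -/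
/-!
The substitution `θ = arctan (y / √(a/b))` linearizes the Riccati inequality: since
`a + b y² = b (a/b + y²)`, it becomes `θ' ≤ √(ab)`. Integrating gives
`θ t ≤ θ 0 + t √(ab) ≤ t √(ab) + arctan (M √(b/a))`, and as long as the right-hand side stays
below `π / 2`, applying the increasing function `tan` undoes the substitution.
-/

open Real Set

theorem image_le_add_mul_of_deriv_le {f f' : ℝ → ℝ} {a b C : ℝ}
    (hf : ContinuousOn f (Icc a b))
    (hf' : ∀ x ∈ Ico a b, HasDerivWithinAt f (f' x) (Icc a b) x)
    (bound : ∀ x ∈ Ico a b, f' x ≤ C) :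
    ∀ x ∈ Icc a b, f x ≤ f a + C * (x - a) := by
  have hB' (x : ℝ) : HasDerivAt (fun x ↦ f a + C * (x - a)) C x := by
    simpa using ((hasDerivAt_id x).sub_const a).const_mul C |>.const_add (f a)
  exact image_le_of_deriv_right_le_deriv_boundary hf
    (fun x hx ↦ (hf' x hx).mono_of_mem_nhdsWithin (Icc_mem_nhdsGE_of_mem hx)) (by simp)
    (by fun_prop) (fun x _ ↦ (hB' x).hasDerivWithinAt) bound

theorem arctan_div_sqrt_deriv_le_of_riccati {a b y y' : ℝ} (ha : 0 < a) (hb : 0 < b)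
    (h : y' ≤ a + b * y ^ 2) :
    1 / (1 + (y / √(a / b)) ^ 2) * (y' / √(a / b)) ≤ √(a * b) := by
  set k := √(a / b)
  have hk : 0 < k := sqrt_pos.2 (div_pos ha hb)
  have hk2 : k ^ 2 = a / b := sq_sqrt (div_nonneg ha.le hb.le)
  have hkb : k * b = √(a * b) := by
    rw [← sqrt_sq hb.le, ← sqrt_mul (div_nonneg ha.le hb.le), sqrt_sq hb.le]
    field_simp
  have hpos : 0 < k ^ 2 + y ^ 2 := by positivity
  calc 1 / (1 + (y / k) ^ 2) * (y' / k) = k * y' / (k ^ 2 + y ^ 2) := by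
        field_simp
    _ ≤ k * (a + b * y ^ 2) / (k ^ 2 + y ^ 2) := by gcongr
    _ = k * b := by
        rw [div_eq_iff hpos.ne', hk2]
        field_simp
    _ = √(a * b) := hkb

theorem le_mul_tan_of_arctan_div_le {y k φ : ℝ} (hk : 0 < k) (h : arctan (y / k) ≤ φ)
    (hφ : φ < π / 2) : y ≤ k * tan φ := by
  have hθ : arctan (y / k) ∈ Ioo (-(π / 2)) (π / 2) :=
    ⟨neg_pi_div_two_lt_arctan _, arctan_lt_pi_div_two _⟩
  have : y / k ≤ tan φ :=
    calc y / k = tan (arctan (y / k)) := (tan_arctan _).symm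
      _ ≤ tan φ := strictMonoOn_tan.monotoneOn hθ ⟨hθ.1.trans_le h, hφ⟩ h
  exact (div_le_iff₀' hk).1 this

theorem riccati_tangent_comparison_general
    (a b M T : ℝ) (ha : 0 < a) (hb : 0 < b)
    (hT : T * Real.sqrt (a * b) + Real.arctan (M * Real.sqrt (b / a)) < π / 2)
    (y y' : ℝ → ℝ)
    (hcont : ContinuousOn y (Set.Icc 0 T))
    (hderiv : ∀ t ∈ Set.Ico 0 T, HasDerivWithinAt y (y' t) (Set.Icc 0 T) t)
    (hy0 : y 0 ≤ M)
    (hbound : ∀ t ∈ Set.Ico 0 T, y' t ≤ a + b * (y t) ^ 2) :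
    ∀ t ∈ Set.Icc 0 T,
      y t ≤ Real.sqrt (a / b) *
        Real.tan (t * Real.sqrt (a * b) + Real.arctan (M * Real.sqrt (b / a))) := by
  intro t ht
  set k := √(a / b)
  have hk : 0 < k := sqrt_pos.2 (div_pos ha hb)
  have hθ0 : arctan (y 0 / k) ≤ arctan (M * √(b / a)) := by
    rw [arctan_le_arctan_iff, show √(b / a) = k⁻¹ by rw [← sqrt_inv, inv_div], ← div_eq_mul_inv]
    exact div_le_div_of_nonneg_right hy0 hk.le
  have hθt : arctan (y t / k) ≤ arctan (y 0 / k) + √(a * b) * (t - 0) :=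
    image_le_add_mul_of_deriv_le (continuous_arctan.comp_continuousOn (hcont.div_const k))
      (fun s hs ↦ ((hderiv s hs).div_const k).arctan)
      (fun s hs ↦ arctan_div_sqrt_deriv_le_of_riccati ha hb (hbound s hs)) t ht
  have hst : t * √(a * b) ≤ T * √(a * b) := by gcongr; exact ht.2
  exact le_mul_tan_of_arctan_div_le hk (by linarith) (by linarith)

/-- Comparison bound for the differential inequality `y' ≤ a + b y²`,
whose equality case is solved by the tangent function: if `y(0) ≤ M` and
`T√(ab) + arctan(M√(b/a)) < π/2`, then
`y(t) ≤ √(a/b) tan(t√(ab) + arctan(M√(b/a)))` on `[0, T]`. -/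
theorem riccati_tangent_comparison
    (a b M T : ℝ) (ha : 0 < a) (hb : 0 < b) (hM : 0 ≤ M) (hT0 : 0 < T)
    (hT : T * Real.sqrt (a * b) + Real.arctan (M * Real.sqrt (b / a)) < π / 2)
    (y y' : ℝ → ℝ)
    (hcont : ContinuousOn y (Set.Icc 0 T))
    (hderiv : ∀ t ∈ Set.Ico 0 T, HasDerivWithinAt y (y' t) (Set.Icc 0 T) t)
    (hy0 : y 0 ≤ M)
    (hbound : ∀ t ∈ Set.Ico 0 T, y' t ≤ a + b * (y t) ^ 2) :
    ∀ t ∈ Set.Icc 0 T,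
      y t ≤ Real.sqrt (a / b) *
        Real.tan (t * Real.sqrt (a * b) + Real.arctan (M * Real.sqrt (b / a))) :=
  riccati_tangent_comparison_general a b M T ha hb hT y y' hcont hderiv hy0 hbound
end
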